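/- arXiv:1108.6282 — 9 statements merged into one kernel-verified Lean document; each statement's English description precedes it below -/
import Mathlib

section
/- Let H be a Hilbert space with orthonormal basis (e_i). Let G = (½e₁, e₂, ¼e₁, e₃, ⅛e₁, e₄, …) and F = (e₁, e₂, e₁, e₃, e₁, e₄, …). Then for every f ∈ H, the series Σᵢ ⟨f, gᵢ⟩ fᵢ converges to f. -/
open scoped RealInnerProductSpace

/- The odd terms `⟨f, e_{k+1}⟩ e_{k+1}` are the Fourier expansion of `f` with the `e₀`-component
removed, and the even terms are `2^{-(k+1)} ⟨f, e₀⟩ e₀`, whose geometric weights sum to `1` and so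
restore exactly that component. -/

section

variable {ι E : Type*} [NormedAddCommGroup E] [InnerProductSpace ℝ E]

theorem HilbertBasis.hasSum_inner_smul (b : HilbertBasis ι ℝ E) (x : E) :
    HasSum (fun i => ⟪x, b i⟫ • b i) x := by
  simpa only [b.repr_apply_apply, real_inner_comm] using b.hasSum_repr x

theorem HilbertBasis.hasSum_inner_smul_succ (b : HilbertBasis ℕ ℝ E) (x : E) :
    HasSum (fun k => ⟪x, b (k + 1)⟫ • b (k + 1)) (x - ⟪x, b 0⟫ • b 0) := by
  simpa using (hasSum_nat_add_iff' 1).2 (b.hasSum_inner_smul x)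

theorem hasSum_inner_smul_smul_of_hasSum_one {c : ι → ℝ} (hc : HasSum c 1) (x v : E) :
    HasSum (fun i => ⟪x, c i • v⟫ • v) (⟪x, v⟫ • v) := by
  simpa only [real_inner_smul_right, smul_smul, one_mul] using hc.smul_const (⟪x, v⟫ • v)

end

theorem hasSum_inv_two_pow_succ : HasSum (fun k : ℕ => ((2 : ℝ) ^ (k + 1))⁻¹) 1 := by
  simpa only [pow_succ', mul_inv, div_eq_mul_inv, one_div, one_mul] using hasSum_geometric_two' 1

/-- With `G = (½e₁, e₂, ¼e₁, e₃, …)` and `F = (e₁, e₂, e₁, e₃, e₁, e₄, …)`,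
for every `f ∈ H` the series `Σᵢ ⟨f, gᵢ⟩ fᵢ` converges to `f`. -/
theorem stmt_1 (H : Type*) [NormedAddCommGroup H] [InnerProductSpace ℝ H]
    (e : HilbertBasis ℕ ℝ H) (g F : ℕ → H)
    (hg : ∀ k : ℕ, g (2 * k) = ((2 : ℝ) ^ (k + 1))⁻¹ • e 0 ∧ g (2 * k + 1) = e (k + 1))
    (hF : ∀ k : ℕ, F (2 * k) = e 0 ∧ F (2 * k + 1) = e (k + 1)) :
    ∀ f : H, Filter.Tendsto (fun n => ∑ i ∈ Finset.range n, ⟪f, g i⟫ • F i)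
      Filter.atTop (nhds f) := by
  intro f
  have heven : HasSum (fun k => ⟪f, g (2 * k)⟫ • F (2 * k)) (⟪f, e 0⟫ • e 0) := by
    convert hasSum_inner_smul_smul_of_hasSum_one hasSum_inv_two_pow_succ f (e 0) using 2 with k
    rw [(hg k).1, (hF k).1]
  have hodd : HasSum (fun k => ⟪f, g (2 * k + 1)⟫ • F (2 * k + 1)) (f - ⟪f, e 0⟫ • e 0) := by
    convert e.hasSum_inner_smul_succ f using 2 with k
    rw [(hg k).2, (hF k).2]
  simpa only [add_sub_cancel] using
    (HasSum.even_add_odd (f := fun i => ⟪f, g i⟫ • F i) heven hodd).tendsto_sum_nat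
end

section
/- Let H be a Hilbert space with orthonormal basis (e_i). Let G = (e₁, e₁, e₁, e₂, e₂, e₂, e₃, e₃, e₃, …) and F = (e₁, e₁, −e₁, e₂, e₁, −e₁, e₃, e₁, −e₁, …). Then for g ∈ H, the series Σᵢ ⟨g, fᵢ⟩ gᵢ converges to g if and only if g lies in the closed linear span of {e_i : i ≥ 2}, i.e., ⟨g, e₁⟩ = 0. -/
open scoped RealInnerProductSpace

/-! Grouped in consecutive triples, the `k`-th block of the series is
`⟨g, eₖ⟩ eₖ + ⟨g, e₁⟩ eₖ - ⟨g, e₁⟩ eₖ`. So the partial sums are those of the Fourier series of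
`g`, except that every third one carries the extra term `⟨g, e₁⟩ eₖ`. The Fourier series
converges to `g`, hence the series converges to `g` iff `⟨g, e₁⟩ eₖ → 0`, that is iff
`⟨g, e₁⟩ = 0`, as `‖eₖ‖ = 1`. -/

open Filter Finset Topology

theorem Filter.tendsto_of_tendsto_comp_mul_add {α : Type*} {l : Filter α} {u : ℕ → α} {k : ℕ}
    (hk : 0 < k) (h : ∀ r < k, Tendsto (fun m => u (k * m + r)) atTop l) :
    Tendsto u atTop l := by
  intro s hs
  have hall : ∀ᶠ m in atTop, ∀ r < k, u (k * m + r) ∈ s :=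
    (eventually_all_finite (Set.finite_lt_nat k)).2 fun r hr => h r hr hs
  obtain ⟨N, hN⟩ := eventually_atTop.1 hall
  refine mem_map.2 (mem_atTop_sets.2 ⟨k * N, fun n hn => ?_⟩)
  rw [Set.mem_preimage, ← Nat.div_add_mod n k]
  exact hN _ ((Nat.le_div_iff_mul_le hk).2 (by linarith)) _ (Nat.mod_lt n hk)

section Triples

variable {M : Type*} [AddCommGroup M] {f a b : ℕ → M}
  (hf : ∀ k, f (3 * k) = a k ∧ f (3 * k + 1) = b k ∧ f (3 * k + 2) = -b k)
include hf

theorem sum_range_three_mul_of_triples (m : ℕ) :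
    ∑ i ∈ range (3 * m), f i = ∑ k ∈ range m, a k := by
  induction m with
  | zero => simp
  | succ m ih =>
    rw [show 3 * (m + 1) = 3 * m + 2 + 1 by ring, sum_range_succ, sum_range_succ,
      sum_range_succ, ih, sum_range_succ, (hf m).1, (hf m).2.1, (hf m).2.2]
    abel

theorem sum_range_three_mul_add_one_of_triples (m : ℕ) :
    ∑ i ∈ range (3 * m + 1), f i = ∑ k ∈ range (m + 1), a k := by
  rw [sum_range_succ, sum_range_three_mul_of_triples hf, (hf m).1, sum_range_succ]

theorem sum_range_three_mul_add_two_of_triples (m : ℕ) :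
    ∑ i ∈ range (3 * m + 2), f i = ∑ k ∈ range (m + 1), a k + b m := by
  rw [sum_range_succ, sum_range_three_mul_add_one_of_triples hf, (hf m).2.1]

theorem tendsto_sum_range_iff_of_triples [TopologicalSpace M] [IsTopologicalAddGroup M]
    (x : M) :
    Tendsto (fun n => ∑ i ∈ range n, f i) atTop (𝓝 x) ↔
      Tendsto (fun m => ∑ k ∈ range m, a k) atTop (𝓝 x) ∧ Tendsto b atTop (𝓝 0) := by
  set S := fun n => ∑ i ∈ range n, f i
  set T := fun m => ∑ k ∈ range m, a k
  have hS0 (m : ℕ) : S (3 * m) = T m := sum_range_three_mul_of_triples hf m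
  have hS1 (m : ℕ) : S (3 * m + 1) = T (m + 1) := sum_range_three_mul_add_one_of_triples hf m
  have hS2 (m : ℕ) : S (3 * m + 2) = T (m + 1) + b m :=
    sum_range_three_mul_add_two_of_triples hf m
  constructor
  · intro hSx
    have hmul : Tendsto (fun m : ℕ => 3 * m) atTop atTop :=
      tendsto_id.const_mul_atTop' (by norm_num)
    have hT : Tendsto T atTop (𝓝 x) := by simpa only [Function.comp_def, hS0] using hSx.comp hmul
    have hT1 : Tendsto (fun m => T (m + 1)) atTop (𝓝 x) := (tendsto_add_atTop_iff_nat 1).2 hT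
    have hS2x : Tendsto (fun m => S (3 * m + 2)) atTop (𝓝 x) :=
      hSx.comp (tendsto_atTop_mono (fun m => Nat.le_add_right _ 2) hmul)
    refine ⟨hT, ?_⟩
    simpa only [hS2, add_sub_cancel_left, sub_self] using hS2x.sub hT1
  · rintro ⟨hT, hb⟩
    refine tendsto_of_tendsto_comp_mul_add (k := 3) (by norm_num) fun r hr => ?_
    have hT1 : Tendsto (fun m => T (m + 1)) atTop (𝓝 x) := (tendsto_add_atTop_iff_nat 1).2 hT
    interval_cases r
    · simpa only [add_zero, hS0] using hT
    · simpa only [hS1] using hT1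
    · simpa only [hS2, add_zero] using hT1.add hb

end Triples

theorem tendsto_smul_nhds_zero_iff_of_norm_eq_one {𝕜 E ι : Type*} [NormedField 𝕜]
    [SeminormedAddCommGroup E] [Module 𝕜 E] [NormSMulClass 𝕜 E] {l : Filter ι} [l.NeBot]
    {v : ι → E} (hv : ∀ i, ‖v i‖ = 1) (c : 𝕜) :
    Tendsto (fun i => c • v i) l (𝓝 0) ↔ c = 0 := by
  refine ⟨fun h => ?_, fun hc => by simp [hc, tendsto_const_nhds]⟩
  have hnorm : Tendsto (fun _ : ι => ‖c‖) l (𝓝 0) := by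
    simpa only [norm_smul, hv, mul_one] using (tendsto_zero_iff_norm_tendsto_zero.1 h)
  exact norm_eq_zero.1 (tendsto_nhds_unique tendsto_const_nhds hnorm)

/-- With `G = (e₁, e₁, e₁, e₂, e₂, e₂, …)` and `F = (e₁, e₁, −e₁, e₂, e₁, −e₁, …)`,
the series `Σᵢ ⟨g, fᵢ⟩ gᵢ` converges to `g` iff `⟨g, e₁⟩ = 0`. -/
theorem stmt_4 (H : Type*) [NormedAddCommGroup H] [InnerProductSpace ℝ H]
    (e : HilbertBasis ℕ ℝ H) (g F : ℕ → H)
    (hg : ∀ k : ℕ, g (3 * k) = e k ∧ g (3 * k + 1) = e k ∧ g (3 * k + 2) = e k)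
    (hF : ∀ k : ℕ, F (3 * k) = e k ∧ F (3 * k + 1) = e 0 ∧ F (3 * k + 2) = -e 0) :
    ∀ x : H, Filter.Tendsto (fun n => ∑ i ∈ Finset.range n, ⟪x, F i⟫ • g i)
      Filter.atTop (nhds x) ↔ ⟪x, e 0⟫ = 0 := by
  intro x
  have htriples (k : ℕ) :
      ⟪x, F (3 * k)⟫ • g (3 * k) = ⟪e k, x⟫ • e k ∧
      ⟪x, F (3 * k + 1)⟫ • g (3 * k + 1) = ⟪x, e 0⟫ • e k ∧
      ⟪x, F (3 * k + 2)⟫ • g (3 * k + 2) = -(⟪x, e 0⟫ • e k) := by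
    simp only [(hF k).1, (hF k).2.1, (hF k).2.2, (hg k).1, (hg k).2.1, (hg k).2.2,
      real_inner_comm, inner_neg_right, neg_smul, and_self]
  have hfourier : Tendsto (fun m => ∑ k ∈ range m, ⟪e k, x⟫ • e k) atTop (𝓝 x) := by
    simpa only [e.repr_apply_apply] using (e.hasSum_repr x).tendsto_sum_nat
  rw [tendsto_sum_range_iff_of_triples htriples, and_iff_right hfourier,
    tendsto_smul_nhds_zero_iff_of_norm_eq_one e.orthonormal.norm_eq_one]
end

section
/- Let H be a Hilbert space, (g_i) a Bessel sequence in H with Bessel bound B, and (f_i) a sequence in H such that f = Σᵢ ⟨f, gᵢ⟩ fᵢ for every f ∈ H. Then (f_i) satisfies the lower frame condition with bound 1/B on its analysis domain: for every g ∈ H with Σᵢ |⟨g, fᵢ⟩|² < ∞, one has (1/B)‖g‖² ≤ Σᵢ |⟨g, fᵢ⟩|². -/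
open scoped RealInnerProductSpace
open Filter Topology

/-! Pairing the expansion `h = Σᵢ ⟪h, gᵢ⟫ Fᵢ` with `h` gives `‖h‖² = Σᵢ ⟪h, gᵢ⟫ ⟪h, Fᵢ⟫`, so by
Cauchy–Schwarz and the Bessel bound `‖h‖⁴ ≤ B ‖h‖² Σᵢ ⟪h, Fᵢ⟫²`. -/

theorem sq_sum_mul_le_tsum_sq_mul_tsum_sq {ι : Type*} {a b : ι → ℝ}
    (ha : Summable fun i => a i ^ 2) (hb : Summable fun i => b i ^ 2) (s : Finset ι) :
    (∑ i ∈ s, a i * b i) ^ 2 ≤ (∑' i, a i ^ 2) * ∑' i, b i ^ 2 :=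
  (Finset.sum_mul_sq_le_sq_mul_sq s a b).trans <|
    mul_le_mul (ha.sum_le_tsum s fun _ _ => sq_nonneg _) (hb.sum_le_tsum s fun _ _ => sq_nonneg _)
      (Finset.sum_nonneg fun _ _ => sq_nonneg _) (tsum_nonneg fun _ => sq_nonneg _)

theorem tendsto_sum_range_mul_inner {H : Type*} [NormedAddCommGroup H] [InnerProductSpace ℝ H]
    {c : ℕ → ℝ} {F : ℕ → H} {f : H}
    (hf : Tendsto (fun n => ∑ i ∈ Finset.range n, c i • F i) atTop (𝓝 f)) (h : H) :
    Tendsto (fun n => ∑ i ∈ Finset.range n, c i * ⟪h, F i⟫) atTop (𝓝 ⟪h, f⟫) := by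
  simpa only [inner_sum, real_inner_smul_right] using (tendsto_const_nhds (x := h)).inner (𝕜 := ℝ) hf

theorem norm_sq_sq_le_of_tendsto_sum_range {H : Type*} [NormedAddCommGroup H]
    [InnerProductSpace ℝ H] {g F : ℕ → H} {h : H}
    (hexp : Tendsto (fun n => ∑ i ∈ Finset.range n, ⟪h, g i⟫ • F i) atTop (𝓝 h))
    (hg : Summable fun i => ⟪h, g i⟫ ^ 2) (hF : Summable fun i => ⟪h, F i⟫ ^ 2) :
    (‖h‖ ^ 2) ^ 2 ≤ (∑' i, ⟪h, g i⟫ ^ 2) * ∑' i, ⟪h, F i⟫ ^ 2 := by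
  have hlim := (tendsto_sum_range_mul_inner hexp h).pow 2
  rw [real_inner_self_eq_norm_sq] at hlim
  exact le_of_tendsto' hlim fun n => sq_sum_mul_le_tsum_sq_mul_tsum_sq hg hF _

theorem one_div_mul_le_of_sq_le_mul {x B T : ℝ} (hx : 0 ≤ x) (hT : 0 ≤ T)
    (h : x ^ 2 ≤ B * x * T) : 1 / B * x ≤ T := by
  rcases hx.eq_or_lt with rfl | hx
  · simpa using hT
  have hxBT : x ≤ B * T := le_of_mul_le_mul_left (by nlinarith) hx
  have hB : 0 < B := pos_of_mul_pos_left (hx.trans_le hxBT) hT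
  rw [one_div_mul_eq_div, div_le_iff₀ hB]
  linarith

theorem stmt_5_general (H : Type*) [NormedAddCommGroup H] [InnerProductSpace ℝ H]
    (g F : ℕ → H) (B : ℝ)
    (hBessel : ∀ f : H, Summable (fun i => ⟪f, g i⟫ ^ 2) ∧ ∑' i, ⟪f, g i⟫ ^ 2 ≤ B * ‖f‖ ^ 2)
    (hexp : ∀ f : H, Filter.Tendsto (fun n => ∑ i ∈ Finset.range n, ⟪f, g i⟫ • F i)
      Filter.atTop (nhds f)) :
    ∀ h : H, Summable (fun i => ⟪h, F i⟫ ^ 2) →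
      (1 / B) * ‖h‖ ^ 2 ≤ ∑' i, ⟪h, F i⟫ ^ 2 := by
  intro h hF
  obtain ⟨hg, hbound⟩ := hBessel h
  have hT : 0 ≤ ∑' i, ⟪h, F i⟫ ^ 2 := tsum_nonneg fun _ => sq_nonneg _
  refine one_div_mul_le_of_sq_le_mul (sq_nonneg _) hT ?_
  calc (‖h‖ ^ 2) ^ 2 ≤ (∑' i, ⟪h, g i⟫ ^ 2) * ∑' i, ⟪h, F i⟫ ^ 2 :=
        norm_sq_sq_le_of_tendsto_sum_range (hexp h) hg hF
    _ ≤ B * ‖h‖ ^ 2 * ∑' i, ⟪h, F i⟫ ^ 2 := mul_le_mul_of_nonneg_right hbound hT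

/-- If `(gᵢ)` is Bessel with bound `B` and `f = Σᵢ ⟨f, gᵢ⟩ fᵢ` for all `f`, then `(fᵢ)`
satisfies the lower frame condition with bound `1/B` on its analysis domain. -/
theorem stmt_5 (H : Type*) [NormedAddCommGroup H] [InnerProductSpace ℝ H]
    (g F : ℕ → H) (B : ℝ) (hB : 0 < B)
    (hBessel : ∀ f : H, Summable (fun i => ⟪f, g i⟫ ^ 2) ∧ ∑' i, ⟪f, g i⟫ ^ 2 ≤ B * ‖f‖ ^ 2)
    (hexp : ∀ f : H, Filter.Tendsto (fun n => ∑ i ∈ Finset.range n, ⟪f, g i⟫ • F i)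
      Filter.atTop (nhds f)) :
    ∀ h : H, Summable (fun i => ⟪h, F i⟫ ^ 2) →
      (1 / B) * ‖h‖ ^ 2 ≤ ∑' i, ⟪h, F i⟫ ^ 2 :=
  stmt_5_general H g F B hBessel hexp
end

section
/- Let H be a Hilbert space, (g_i) a frame for H with analysis operator U : H → ℓ², U f = (⟨f, gᵢ⟩). If L : ℓ² → H is a bounded operator with L U = id_H (a bounded linear extension of U⁻¹), then (L δᵢ) is a frame for H and f = Σᵢ ⟨f, gᵢ⟩ L δᵢ for every f ∈ H, i.e., (L δᵢ) is a dual frame of (g_i). -/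
/-!
Write `T = L†` and `δᵢ = lp.single 2 i 1`. The coefficients of `f` against `L δᵢ` are
`⟪f, L δᵢ⟫ = (T f) i`, so `∑ ⟪f, L δᵢ⟫² = ‖T f‖²`. This is at most `‖L‖² ‖f‖²`, and at least
`‖f‖² / ‖U‖²` because `U† T = (L U)† = id`. Reconstruction is just `L` applied to the expansion
`U f = ∑ (U f)ᵢ δᵢ` in `ℓ²`.
-/

open scoped RealInnerProductSpace

section

variable {ι H : Type*} [NormedAddCommGroup H] [InnerProductSpace ℝ H]

def IsFrame (g : ι → H) : Prop :=
  ∃ A B : ℝ, 0 < A ∧ 0 < B ∧ ∀ f : H,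
    Summable (fun i => ⟪f, g i⟫ ^ 2) ∧
    A * ‖f‖ ^ 2 ≤ ∑' i, ⟪f, g i⟫ ^ 2 ∧ ∑' i, ⟪f, g i⟫ ^ 2 ≤ B * ‖f‖ ^ 2

theorem hasSum_inner_sq_of_analysis (T : H →L[ℝ] lp (fun _ : ι => ℝ) 2) {g : ι → H}
    (hT : ∀ f i, ⟪f, g i⟫ = T f i) (f : H) :
    HasSum (fun i => ⟪f, g i⟫ ^ 2) (‖T f‖ ^ 2) := by
  have h := lp.hasSum_inner (𝕜 := ℝ) (T f) (T f)
  rw [real_inner_self_eq_norm_sq] at h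
  refine h.congr_fun fun i => ?_
  simp [hT, sq]

theorem isFrame_of_analysis (T : H →L[ℝ] lp (fun _ : ι => ℝ) 2) {g : ι → H}
    (hT : ∀ f i, ⟪f, g i⟫ = T f i) {C : ℝ} (hC : 0 < C) (hlower : ∀ f, ‖f‖ ≤ C * ‖T f‖) :
    IsFrame g := by
  refine ⟨(C ^ 2)⁻¹, ‖T‖ ^ 2 + 1, by positivity, by positivity, fun f => ?_⟩
  have hsum := hasSum_inner_sq_of_analysis T hT f
  rw [hsum.tsum_eq]
  refine ⟨hsum.summable, ?_, ?_⟩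
  · rw [inv_mul_le_iff₀ (by positivity), ← mul_pow]
    exact pow_le_pow_left₀ (norm_nonneg f) (hlower f) 2
  · calc ‖T f‖ ^ 2 ≤ (‖T‖ * ‖f‖) ^ 2 := pow_le_pow_left₀ (norm_nonneg _) (T.le_opNorm f) 2
      _ ≤ (‖T‖ ^ 2 + 1) * ‖f‖ ^ 2 := by nlinarith [sq_nonneg ‖f‖]

variable [DecidableEq ι]

theorem hasSum_smul_map_single (L : lp (fun _ : ι => ℝ) 2 →L[ℝ] H) (x : lp (fun _ : ι => ℝ) 2) :
    HasSum (fun i => x i • L (lp.single 2 i 1)) (L x) := by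
  have h := (lp.hasSum_single (by norm_num) x).mapL L
  refine h.congr_fun fun i => ?_
  simp only [← map_smul, ← lp.single_smul, smul_eq_mul, mul_one]

variable [CompleteSpace H]

theorem inner_map_single_eq_adjoint_apply (L : lp (fun _ : ι => ℝ) 2 →L[ℝ] H) (f : H) (i : ι) :
    ⟪f, L (lp.single 2 i 1)⟫ = L.adjoint f i := by
  rw [← ContinuousLinearMap.adjoint_inner_left, lp.inner_single_right]
  simp

theorem norm_le_opNorm_mul_norm_adjoint_apply {E : Type*} [NormedAddCommGroup E]
    [InnerProductSpace ℝ E] [CompleteSpace E] {U : H →L[ℝ] E} {L : E →L[ℝ] H}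
    (hLU : ∀ f, L (U f) = f) (f : H) : ‖f‖ ≤ ‖U‖ * ‖L.adjoint f‖ := by
  have hid : U.adjoint ∘L L.adjoint = .id ℝ H := by
    rw [← ContinuousLinearMap.adjoint_comp]
    convert ContinuousLinearMap.adjoint_id (𝕜 := ℝ) (E := H)
    ext f
    exact hLU f
  calc ‖f‖ = ‖U.adjoint (L.adjoint f)‖ := by rw [← ContinuousLinearMap.comp_apply, hid]; rfl
    _ ≤ ‖U.adjoint‖ * ‖L.adjoint f‖ := U.adjoint.le_opNorm _
    _ = ‖U‖ * ‖L.adjoint f‖ := by rw [LinearIsometryEquiv.norm_map]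

end

theorem stmt_10_general (H : Type*) [NormedAddCommGroup H] [InnerProductSpace ℝ H] [CompleteSpace H]
    (g : ℕ → H)
    (U : H →L[ℝ] lp (fun _ : ℕ => ℝ) 2) (hU : ∀ (f : H) (i : ℕ), U f i = ⟪f, g i⟫)
    (L : lp (fun _ : ℕ => ℝ) 2 →L[ℝ] H) (hLU : ∀ f : H, L (U f) = f) :
    (∃ A B : ℝ, 0 < A ∧ 0 < B ∧ ∀ f : H,
      Summable (fun i => ⟪f, L (lp.single 2 i 1)⟫ ^ 2) ∧
      A * ‖f‖ ^ 2 ≤ ∑' i, ⟪f, L (lp.single 2 i 1)⟫ ^ 2 ∧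
      ∑' i, ⟪f, L (lp.single 2 i 1)⟫ ^ 2 ≤ B * ‖f‖ ^ 2) ∧
    (∀ f : H, Filter.Tendsto (fun n => ∑ i ∈ Finset.range n, ⟪f, g i⟫ • L (lp.single 2 i 1))
      Filter.atTop (nhds f)) := by
  refine ⟨?_, fun f => ?_⟩
  · refine isFrame_of_analysis L.adjoint (inner_map_single_eq_adjoint_apply L)
      (C := ‖U‖ + 1) (by positivity) fun f => ?_
    calc ‖f‖ ≤ ‖U‖ * ‖L.adjoint f‖ := norm_le_opNorm_mul_norm_adjoint_apply hLU f
      _ ≤ (‖U‖ + 1) * ‖L.adjoint f‖ := by gcongr; linarith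
  · have h := hasSum_smul_map_single L (U f)
    simp only [hU, hLU] at h
    exact h.tendsto_sum_nat

/-- If `(gᵢ)` is a frame with analysis operator `U` and `L : ℓ² → H` is a bounded
left inverse of `U`, then `(L δᵢ)` is a dual frame of `(gᵢ)`. -/
theorem stmt_10 (H : Type*) [NormedAddCommGroup H] [InnerProductSpace ℝ H] [CompleteSpace H]
    (g : ℕ → H)
    (hframe : ∃ A B : ℝ, 0 < A ∧ 0 < B ∧ ∀ f : H,
      Summable (fun i => ⟪f, g i⟫ ^ 2) ∧
      A * ‖f‖ ^ 2 ≤ ∑' i, ⟪f, g i⟫ ^ 2 ∧ ∑' i, ⟪f, g i⟫ ^ 2 ≤ B * ‖f‖ ^ 2)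
    (U : H →L[ℝ] lp (fun _ : ℕ => ℝ) 2) (hU : ∀ (f : H) (i : ℕ), U f i = ⟪f, g i⟫)
    (L : lp (fun _ : ℕ => ℝ) 2 →L[ℝ] H) (hLU : ∀ f : H, L (U f) = f) :
    (∃ A B : ℝ, 0 < A ∧ 0 < B ∧ ∀ f : H,
      Summable (fun i => ⟪f, L (lp.single 2 i 1)⟫ ^ 2) ∧
      A * ‖f‖ ^ 2 ≤ ∑' i, ⟪f, L (lp.single 2 i 1)⟫ ^ 2 ∧
      ∑' i, ⟪f, L (lp.single 2 i 1)⟫ ^ 2 ≤ B * ‖f‖ ^ 2) ∧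
    (∀ f : H, Filter.Tendsto (fun n => ∑ i ∈ Finset.range n, ⟪f, g i⟫ • L (lp.single 2 i 1))
      Filter.atTop (nhds f)) :=
  stmt_10_general H g U hU L hLU
end

section
/- Let H be a Hilbert space, (g_i) a frame for H with analysis operator U. Every dual frame (f_i) of (g_i) has the form f_i = L δᵢ for some bounded operator L : ℓ² → H with L U = id_H. -/
open scoped RealInnerProductSpace

/-! The required operator is `L = V*`, the adjoint of the analysis operator `V` of the dual
frame `(fᵢ)`. Then `⟪V* δᵢ, h⟫ = ⟪δᵢ, V h⟫ = ⟪fᵢ, h⟫`, and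
`⟪V* (U f), h⟫ = ⟪U f, V h⟫ = ∑ ⟪f, gᵢ⟫ ⟪fᵢ, h⟫`, which is `⟪f, h⟫` by the reconstruction
formula `f = ∑ ⟪f, gᵢ⟫ fᵢ`. -/

section Bessel

variable {ι H : Type*} [NormedAddCommGroup H] [InnerProductSpace ℝ H]

theorem memℓp_two_of_summable_sq {a : ι → ℝ} (ha : Summable fun i => a i ^ 2) : Memℓp a 2 :=
  memℓp_gen <| by simpa using ha

def besselAnalysisₗ (F : ι → H) (hsum : ∀ f : H, Summable fun i => ⟪f, F i⟫ ^ 2) :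
    H →ₗ[ℝ] lp (fun _ : ι => ℝ) 2 where
  toFun f := ⟨fun i => ⟪f, F i⟫, memℓp_two_of_summable_sq (hsum f)⟩
  map_add' f f' := Subtype.ext <| funext fun i => inner_add_left f f' (F i)
  map_smul' c f := Subtype.ext <| funext fun i => real_inner_smul_left f (F i) c

theorem norm_besselAnalysisₗ_sq (F : ι → H) (hsum : ∀ f : H, Summable fun i => ⟪f, F i⟫ ^ 2)
    (f : H) : ‖besselAnalysisₗ F hsum f‖ ^ 2 = ∑' i, ⟪f, F i⟫ ^ 2 := by
  rw [← real_inner_self_eq_norm_sq, lp.inner_eq_tsum]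
  simp [besselAnalysisₗ, sq]

noncomputable def besselAnalysis (F : ι → H) (B : ℝ)
    (hsum : ∀ f : H, Summable fun i => ⟪f, F i⟫ ^ 2)
    (hbound : ∀ f : H, ∑' i, ⟪f, F i⟫ ^ 2 ≤ B * ‖f‖ ^ 2) :
    H →L[ℝ] lp (fun _ : ι => ℝ) 2 :=
  (besselAnalysisₗ F hsum).mkContinuous (Real.sqrt B) fun f => by
    rw [← Real.sqrt_sq (norm_nonneg _), norm_besselAnalysisₗ_sq, ← Real.sqrt_sq (norm_nonneg f),
      ← Real.sqrt_mul' B (sq_nonneg _)]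
    exact Real.sqrt_le_sqrt (hbound f)

variable {F : ι → H} {B : ℝ} {hsum : ∀ f : H, Summable fun i => ⟪f, F i⟫ ^ 2}
  {hbound : ∀ f : H, ∑' i, ⟪f, F i⟫ ^ 2 ≤ B * ‖f‖ ^ 2}

@[simp]
theorem besselAnalysis_apply (f : H) (i : ι) :
    (besselAnalysis F B hsum hbound f : ι → ℝ) i = ⟪f, F i⟫ :=
  rfl

variable [CompleteSpace H]

theorem adjoint_besselAnalysis_single [DecidableEq ι] (i : ι) :
    (besselAnalysis F B hsum hbound).adjoint (lp.single 2 i 1) = F i :=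
  ext_inner_right ℝ fun h => by
    rw [ContinuousLinearMap.adjoint_inner_left, lp.inner_single_left, besselAnalysis_apply]
    simp [real_inner_comm]

end Bessel

theorem adjoint_besselAnalysis_apply_eq_self {H : Type*} [NormedAddCommGroup H]
    [InnerProductSpace ℝ H] [CompleteSpace H] {F : ℕ → H} {B : ℝ}
    {hsum : ∀ f : H, Summable fun i => ⟪f, F i⟫ ^ 2}
    {hbound : ∀ f : H, ∑' i, ⟪f, F i⟫ ^ 2 ≤ B * ‖f‖ ^ 2}
    {g : ℕ → H} {U : H →L[ℝ] lp (fun _ : ℕ => ℝ) 2} (hU : ∀ (f : H) (i : ℕ), U f i = ⟪f, g i⟫)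
    (hdual : ∀ f : H, Filter.Tendsto (fun n => ∑ i ∈ Finset.range n, ⟪f, g i⟫ • F i)
      Filter.atTop (nhds f))
    (f : H) : (besselAnalysis F B hsum hbound).adjoint (U f) = f := by
  refine ext_inner_right ℝ fun h => ?_
  rw [ContinuousLinearMap.adjoint_inner_left]
  have hsum_inner : HasSum (fun i => ⟪f, g i⟫ * ⟪F i, h⟫)
      ⟪U f, besselAnalysis F B hsum hbound h⟫ := by
    refine (lp.hasSum_inner (𝕜 := ℝ) (U f) (besselAnalysis F B hsum hbound h)).congr_fun
      fun i => ?_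
    rw [hU, besselAnalysis_apply, real_inner_comm (F i), RCLike.inner_apply, conj_trivial,
      mul_comm]
  have hpartial : Filter.Tendsto (fun n => ∑ i ∈ Finset.range n, ⟪f, g i⟫ * ⟪F i, h⟫)
      Filter.atTop (nhds ⟪f, h⟫) := by
    simpa only [sum_inner, real_inner_smul_left] using
      (hdual f).inner (𝕜 := ℝ) (tendsto_const_nhds (x := h))
  exact tendsto_nhds_unique hsum_inner.tendsto_sum_nat hpartial

theorem stmt_11_general (H : Type*) [NormedAddCommGroup H] [InnerProductSpace ℝ H] [CompleteSpace H]
    (g : ℕ → H)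
    (U : H →L[ℝ] lp (fun _ : ℕ => ℝ) 2) (hU : ∀ (f : H) (i : ℕ), U f i = ⟪f, g i⟫)
    (F : ℕ → H)
    (hFframe : ∃ A B : ℝ, 0 < A ∧ 0 < B ∧ ∀ f : H,
      Summable (fun i => ⟪f, F i⟫ ^ 2) ∧
      A * ‖f‖ ^ 2 ≤ ∑' i, ⟪f, F i⟫ ^ 2 ∧ ∑' i, ⟪f, F i⟫ ^ 2 ≤ B * ‖f‖ ^ 2)
    (hdual : ∀ f : H, Filter.Tendsto (fun n => ∑ i ∈ Finset.range n, ⟪f, g i⟫ • F i)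
      Filter.atTop (nhds f)) :
    ∃ L : lp (fun _ : ℕ => ℝ) 2 →L[ℝ] H,
      (∀ f : H, L (U f) = f) ∧ ∀ i : ℕ, F i = L (lp.single 2 i 1) := by
  obtain ⟨_, B, _, _, hF⟩ := hFframe
  let V := besselAnalysis F B (fun f => (hF f).1) (fun f => (hF f).2.2)
  exact ⟨V.adjoint, adjoint_besselAnalysis_apply_eq_self hU hdual,
    fun i => (adjoint_besselAnalysis_single i).symm⟩

/-- Every dual frame `(fᵢ)` of a frame `(gᵢ)` has the form `fᵢ = L δᵢ` with `L : ℓ² → H`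
bounded and `L U = id`. -/
theorem stmt_11 (H : Type*) [NormedAddCommGroup H] [InnerProductSpace ℝ H] [CompleteSpace H]
    (g : ℕ → H)
    (hframe : ∃ A B : ℝ, 0 < A ∧ 0 < B ∧ ∀ f : H,
      Summable (fun i => ⟪f, g i⟫ ^ 2) ∧
      A * ‖f‖ ^ 2 ≤ ∑' i, ⟪f, g i⟫ ^ 2 ∧ ∑' i, ⟪f, g i⟫ ^ 2 ≤ B * ‖f‖ ^ 2)
    (U : H →L[ℝ] lp (fun _ : ℕ => ℝ) 2) (hU : ∀ (f : H) (i : ℕ), U f i = ⟪f, g i⟫)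
    (F : ℕ → H)
    (hFframe : ∃ A B : ℝ, 0 < A ∧ 0 < B ∧ ∀ f : H,
      Summable (fun i => ⟪f, F i⟫ ^ 2) ∧
      A * ‖f‖ ^ 2 ≤ ∑' i, ⟪f, F i⟫ ^ 2 ∧ ∑' i, ⟪f, F i⟫ ^ 2 ≤ B * ‖f‖ ^ 2)
    (hdual : ∀ f : H, Filter.Tendsto (fun n => ∑ i ∈ Finset.range n, ⟪f, g i⟫ • F i)
      Filter.atTop (nhds f)) :
    ∃ L : lp (fun _ : ℕ => ℝ) 2 →L[ℝ] H,
      (∀ f : H, L (U f) = f) ∧ ∀ i : ℕ, F i = L (lp.single 2 i 1) :=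
  stmt_11_general H g U hU F hFframe hdual
end

section
/- Let H be a Hilbert space and (g_i) a sequence satisfying the lower frame condition with bound A > 0: A‖f‖² ≤ Σᵢ |⟨f, gᵢ⟩|² for all f with (⟨f, gᵢ⟩)ᵢ ∈ ℓ². Then the range of the analysis operator U (defined on D(U) = {f : (⟨f,gᵢ⟩) ∈ ℓ²}) is closed in ℓ², and U has a bounded inverse U⁻¹ : R(U) → D(U) with ‖U⁻¹‖ ≤ A^{-1/2}. -/
open scoped RealInnerProductSpace

set_option synthInstance.maxHeartbeats 1000000 in
/-- If `(gᵢ)` satisfies the lower frame condition with bound `A`, then the range of the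
analysis operator is closed in `ℓ²`, the analysis operator is injective on its domain, and
its inverse is bounded by `A^{-1/2}`. -/
theorem stmt_12 (H : Type*) [NormedAddCommGroup H] [InnerProductSpace ℝ H] [CompleteSpace H]
    (g : ℕ → H) (A : ℝ) (hA : 0 < A)
    (hlow : ∀ f : H, Summable (fun i => ⟪f, g i⟫ ^ 2) → A * ‖f‖ ^ 2 ≤ ∑' i, ⟪f, g i⟫ ^ 2) :
    IsClosed {c : lp (fun _ : ℕ => ℝ) 2 | ∃ f : H, ∀ i : ℕ, c i = ⟪f, g i⟫} ∧
    (∀ f₁ f₂ : H, Summable (fun i => ⟪f₁, g i⟫ ^ 2) → Summable (fun i => ⟪f₂, g i⟫ ^ 2) →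
      (∀ i : ℕ, ⟪f₁, g i⟫ = ⟪f₂, g i⟫) → f₁ = f₂) ∧
    (∀ f : H, Summable (fun i => ⟪f, g i⟫ ^ 2) →
      ‖f‖ ≤ (Real.sqrt A)⁻¹ * Real.sqrt (∑' i, ⟪f, g i⟫ ^ 2)) := by
  have hsA : 0 < Real.sqrt A := Real.sqrt_pos.2 hA
  -- the key norm bound
  have key : ∀ f : H, Summable (fun i => ⟪f, g i⟫ ^ 2) →
      ‖f‖ ≤ (Real.sqrt A)⁻¹ * Real.sqrt (∑' i, ⟪f, g i⟫ ^ 2) := by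
    intro f hs
    have h := hlow f hs
    have h1 : Real.sqrt (A * ‖f‖ ^ 2) ≤ Real.sqrt (∑' i, ⟪f, g i⟫ ^ 2) :=
      Real.sqrt_le_sqrt h
    rw [Real.sqrt_mul hA.le, Real.sqrt_sq (norm_nonneg f)] at h1
    rw [inv_mul_eq_div, le_div_iff₀ hsA]
    linarith [h1]
  -- summability of squares for members of ℓ²
  have sumsq : ∀ u : lp (fun _ : ℕ => ℝ) 2, Summable (fun i => (u i) ^ 2) := by
    intro u
    have h := lp.memℓp u
    rw [memℓp_gen_iff (by norm_num : (0:ℝ) < (2 : ENNReal).toReal)] at h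
    have : (fun i => ‖u i‖ ^ (2 : ENNReal).toReal) = fun i => (u i) ^ 2 := by
      funext i
      rw [ENNReal.toReal_ofNat, Real.rpow_two, Real.norm_eq_abs, sq_abs]
    rwa [this] at h
  -- sqrt of tsum of squares equals the lp norm
  have normeq : ∀ u : lp (fun _ : ℕ => ℝ) 2,
      Real.sqrt (∑' i, (u i) ^ 2) = ‖u‖ := by
    intro u
    rw [lp.norm_eq_tsum_rpow (by norm_num) u]
    have : (fun i => ‖u i‖ ^ (2 : ENNReal).toReal) = fun i => (u i) ^ 2 := by
      funext i
      rw [ENNReal.toReal_ofNat, Real.rpow_two, Real.norm_eq_abs, sq_abs]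
    rw [this, ENNReal.toReal_ofNat, Real.sqrt_eq_rpow]
  refine ⟨?_, ?_, key⟩
  · -- closedness of the range
    rw [← isSeqClosed_iff_isClosed]
    intro x c hx hlim
    choose f hf using hx
    -- each f n has summable squared coefficients
    have hsum : ∀ n, Summable (fun i => ⟪f n, g i⟫ ^ 2) := by
      intro n
      have : (fun i => ⟪f n, g i⟫ ^ 2) = fun i => (x n i) ^ 2 := by
        funext i; rw [hf n i]
      rw [this]; exact sumsq (x n)
    -- bound between differences
    have hdiff : ∀ m n, ‖f m - f n‖ ≤ (Real.sqrt A)⁻¹ * ‖x m - x n‖ := by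
      intro m n
      have heq : ∀ i, ⟪f m - f n, g i⟫ = (x m - x n) i := by
        intro i
        rw [inner_sub_left, ← hf m i, ← hf n i, lp.coeFn_sub, Pi.sub_apply]
      have hs : Summable (fun i => ⟪f m - f n, g i⟫ ^ 2) := by
        have : (fun i => ⟪f m - f n, g i⟫ ^ 2) = fun i => ((x m - x n) i) ^ 2 := by
          funext i; rw [heq i]
        rw [this]; exact sumsq _
      have hk := key (f m - f n) hs
      have : (∑' i, ⟪f m - f n, g i⟫ ^ 2) = ∑' i, ((x m - x n) i) ^ 2 := by
        congr 1; funext i; rw [heq i]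
      rw [this, normeq] at hk
      exact hk
    -- f is Cauchy
    have hcauchy : CauchySeq f := by
      rw [Metric.cauchySeq_iff]
      intro ε hε
      have hxc : CauchySeq x := hlim.cauchySeq
      rw [Metric.cauchySeq_iff] at hxc
      obtain ⟨N, hN⟩ := hxc (Real.sqrt A * ε) (by positivity)
      refine ⟨N, fun m hm n hn => ?_⟩
      have h1 := hdiff m n
      have h2 := hN m hm n hn
      rw [dist_eq_norm] at h2 ⊢
      calc ‖f m - f n‖ ≤ (Real.sqrt A)⁻¹ * ‖x m - x n‖ := h1
        _ < (Real.sqrt A)⁻¹ * (Real.sqrt A * ε) := by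
            apply mul_lt_mul_of_pos_left h2 (by positivity)
        _ = ε := by field_simp
    obtain ⟨F, hF⟩ := cauchySeq_tendsto_of_complete hcauchy
    refine ⟨F, fun i => ?_⟩
    -- coordinates of x n converge to c i
    have h1 : Filter.Tendsto (fun n => x n i) Filter.atTop (nhds (c i)) := by
      rw [tendsto_iff_norm_sub_tendsto_zero]
      have hb : ∀ n, ‖x n i - c i‖ ≤ ‖x n - c‖ := by
        intro n
        have := lp.norm_apply_le_norm (by norm_num : (2 : ENNReal) ≠ 0) (x n - c) i
        rwa [lp.coeFn_sub, Pi.sub_apply] at this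
      have hz : Filter.Tendsto (fun n => ‖x n - c‖) Filter.atTop (nhds 0) := by
        rw [← tendsto_iff_norm_sub_tendsto_zero]
        exact hlim
      exact squeeze_zero (fun n => norm_nonneg _) hb hz
    have h2 : Filter.Tendsto (fun n => ⟪f n, g i⟫) Filter.atTop (nhds ⟪F, g i⟫) :=
      hF.inner tendsto_const_nhds
    have h3 : (fun n => x n i) = fun n => ⟪f n, g i⟫ := by
      funext n; exact hf n i
    rw [h3] at h1
    exact tendsto_nhds_unique h1 h2
  · -- injectivity
    intro f₁ f₂ h1 h2 heq
    have hz : (fun i => ⟪f₁ - f₂, g i⟫ ^ 2) = fun _ => (0 : ℝ) := by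
      funext i; rw [inner_sub_left, heq i, sub_self]; ring
    have hs : Summable (fun i => ⟪f₁ - f₂, g i⟫ ^ 2) := by
      rw [hz]; exact summable_zero
    have hk := hlow (f₁ - f₂) hs
    rw [hz, tsum_zero] at hk
    have : ‖f₁ - f₂‖ ^ 2 ≤ 0 := by nlinarith
    have : f₁ - f₂ = 0 := by
      rw [← norm_eq_zero]; nlinarith [norm_nonneg (f₁ - f₂), sq_nonneg ‖f₁ - f₂‖]
    exact sub_eq_zero.1 this
end

section
/- Let H be a Hilbert space, (g_i) a frame for H with analysis operator U : H → ℓ². If the orthogonal complement of the range of U in ℓ² is finite-dimensional, then every sequence (f_i) in H satisfying f = Σᵢ ⟨f, gᵢ⟩ fᵢ for all f ∈ H is itself a frame for H (hence a dual frame of (g_i)). -/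
/-!
Fix `f` and put `aᵢ = ⟪f, Fᵢ⟫`. The pseudo-dual identity, paired with `f`, says that `∑ aᵢ uᵢ`
converges for every `u = Uh` in the range of `U`. The `u ∈ ℓ²` with this property form a subspace
which contains every finitely supported sequence, hence is dense; it also contains the closed,
finite-codimensional range of `U`, hence is closed. So it is all of `ℓ²`, and the uniform
boundedness principle (Landau's theorem) puts `a` in `ℓ²`. A second use of uniform boundedness turns
these pointwise bounds into the upper frame bound, and Cauchy–Schwarz against the upper frame bound
`B` of `(gᵢ)` in `‖f‖² = ∑ ⟪f, gᵢ⟫⟪f, Fᵢ⟫` gives the lower bound `B⁻¹`.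
-/

open scoped RealInnerProductSpace lp
open Filter Finset Topology

noncomputable def truncation (a : ℕ → ℝ) (n : ℕ) : ℓ²(ℕ, ℝ) :=
  ∑ i ∈ range n, lp.single 2 i (a i)

theorem inner_truncation (a : ℕ → ℝ) (n : ℕ) (u : ℓ²(ℕ, ℝ)) :
    ⟪truncation a n, u⟫ = ∑ i ∈ range n, a i * u i := by
  simp [truncation, sum_inner, lp.inner_single_left, mul_comm]

theorem norm_truncation_sq (a : ℕ → ℝ) (n : ℕ) :
    ‖truncation a n‖ ^ 2 = ∑ i ∈ range n, a i ^ 2 := by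
  simpa [truncation] using lp.norm_sum_single (p := 2) (by norm_num) a (range n)

theorem lp.norm_sq_eq_tsum_sq {ι : Type*} (u : ℓ²(ι, ℝ)) : ‖u‖ ^ 2 = ∑' i, u i ^ 2 := by
  simpa using lp.norm_rpow_eq_tsum (p := 2) (by norm_num) u

theorem summable_sq_of_forall_tendsto_inner_truncation {a : ℕ → ℝ}
    (h : ∀ u : ℓ²(ℕ, ℝ), ∃ l, Tendsto (fun n => ⟪truncation a n, u⟫) atTop (𝓝 l)) :
    Summable fun i => a i ^ 2 := by
  obtain ⟨C, hC⟩ : ∃ C, ∀ n, ‖innerSL ℝ (truncation a n)‖ ≤ C := by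
    refine banach_steinhaus fun u => ?_
    obtain ⟨l, hl⟩ := h u
    obtain ⟨C, hC⟩ := hl.norm.bddAbove_range
    exact ⟨C, fun n => hC ⟨n, rfl⟩⟩
  refine summable_of_sum_range_le (c := C ^ 2) (fun i => sq_nonneg _) fun n => ?_
  rw [← norm_truncation_sq, ← innerSL_apply_norm ℝ]
  exact pow_le_pow_left₀ (norm_nonneg _) (hC n) 2

def convergenceSubmodule (a : ℕ → ℝ) : Submodule ℝ ℓ²(ℕ, ℝ) where
  carrier := {u | ∃ l, Tendsto (fun n => ⟪truncation a n, u⟫) atTop (𝓝 l)}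
  add_mem' := by
    rintro u v ⟨l, hl⟩ ⟨m, hm⟩
    exact ⟨l + m, by simpa only [inner_add_right] using hl.add hm⟩
  zero_mem' := ⟨0, by simp⟩
  smul_mem' := by
    rintro c u ⟨l, hl⟩
    exact ⟨c * l, by simpa only [real_inner_smul_right] using hl.const_mul c⟩

theorem single_mem_convergenceSubmodule (a : ℕ → ℝ) (j : ℕ) (x : ℝ) :
    lp.single 2 j x ∈ convergenceSubmodule a := by
  refine ⟨a j * x, tendsto_atTop_of_eventually_const (i₀ := j + 1) fun n hn => ?_⟩
  simp [inner_truncation, lp.single_apply, Pi.single_apply, show j < n by omega]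

theorem dense_convergenceSubmodule (a : ℕ → ℝ) :
    Dense (convergenceSubmodule a : Set ℓ²(ℕ, ℝ)) := fun u =>
  mem_closure_of_tendsto (lp.hasSum_single (by norm_num) u).tendsto_sum_nat
    (Eventually.of_forall fun _ => sum_mem fun j _ => single_mem_convergenceSubmodule a j (u j))

theorem Submodule.eq_top_of_le_of_dense {𝕜 E : Type*} [NontriviallyNormedField 𝕜]
    [CompleteSpace 𝕜] [AddCommGroup E] [TopologicalSpace E] [IsTopologicalAddGroup E]
    [Module 𝕜 E] [ContinuousSMul 𝕜 E] {R M : Submodule 𝕜 E} [FiniteDimensional 𝕜 (E ⧸ R)]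
    (hR : IsClosed (R : Set E)) (hRM : R ≤ M) (hM : Dense (M : Set E)) : M = ⊤ := by
  rw [← SetLike.coe_set_eq, Submodule.top_coe, ← hM.closure_eq,
    (Submodule.isClosed_mono_of_finiteDimensional_quotient hR hRM).closure_eq]

theorem Submodule.finiteDimensional_quotient_of_orthogonal {𝕜 E : Type*} [RCLike 𝕜]
    [NormedAddCommGroup E] [InnerProductSpace 𝕜 E] (K : Submodule 𝕜 E)
    [K.HasOrthogonalProjection] [FiniteDimensional 𝕜 Kᗮ] : FiniteDimensional 𝕜 (E ⧸ K) :=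
  (K.quotientEquivOfIsCompl Kᗮ K.isCompl_orthogonal).symm.finiteDimensional

theorem summable_sq_of_forall_mem_tendsto_inner_truncation {a : ℕ → ℝ}
    (R : Submodule ℝ ℓ²(ℕ, ℝ)) [CompleteSpace R] [FiniteDimensional ℝ Rᗮ]
    (h : ∀ u ∈ R, ∃ l, Tendsto (fun n => ⟪truncation a n, u⟫) atTop (𝓝 l)) :
    Summable fun i => a i ^ 2 := by
  have := R.finiteDimensional_quotient_of_orthogonal
  have htop := Submodule.eq_top_of_le_of_dense (completeSpace_coe_iff_isComplete.1 ‹_›).isClosed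
    h (dense_convergenceSubmodule a)
  exact summable_sq_of_forall_tendsto_inner_truncation fun u =>
    (htop ▸ Submodule.mem_top : u ∈ convergenceSubmodule a)

theorem ContinuousLinearMap.isClosed_range_of_mul_norm_sq_le {E F : Type*}
    [NormedAddCommGroup E] [NormedSpace ℝ E] [CompleteSpace E] [NormedAddCommGroup F]
    [NormedSpace ℝ F] (T : E →L[ℝ] F) {A : ℝ} (hA : 0 < A) (h : ∀ x, A * ‖x‖ ^ 2 ≤ ‖T x‖ ^ 2) :
    IsClosed (Set.range T) := by
  refine (T.antilipschitz_of_bound (K := ⟨(√A)⁻¹, by positivity⟩) fun x => ?_).isClosed_range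
    T.uniformContinuous
  have hbelow : √A * ‖x‖ ≤ ‖T x‖ := by
    rw [← pow_le_pow_iff_left₀ (by positivity) (norm_nonneg _) two_ne_zero, mul_pow,
      Real.sq_sqrt hA.le]
    exact h x
  show ‖x‖ ≤ (√A)⁻¹ * ‖T x‖
  rw [le_inv_mul_iff₀ (by positivity)]
  exact hbelow

section Frames

variable {H : Type*} [NormedAddCommGroup H] [InnerProductSpace ℝ H]

noncomputable def truncatedAnalysis (F : ℕ → H) (n : ℕ) : H →L[ℝ] ℓ²(ℕ, ℝ) :=
  ∑ i ∈ range n, (innerSL ℝ (F i)).smulRight (lp.single 2 i (1 : ℝ))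

theorem truncatedAnalysis_apply (F : ℕ → H) (n : ℕ) (f : H) :
    truncatedAnalysis F n f = truncation (fun i => ⟪f, F i⟫) n := by
  simp [truncatedAnalysis, truncation, ← lp.single_smul, real_inner_comm]

theorem exists_tsum_inner_sq_le [CompleteSpace H] {F : ℕ → H}
    (hF : ∀ f, Summable fun i => ⟪f, F i⟫ ^ 2) :
    ∃ B, 0 < B ∧ ∀ f, ∑' i, ⟪f, F i⟫ ^ 2 ≤ B * ‖f‖ ^ 2 := by
  obtain ⟨C, hC⟩ := banach_steinhaus (g := truncatedAnalysis F) fun f =>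
    ⟨√(∑' i, ⟪f, F i⟫ ^ 2), fun n => by
      rw [truncatedAnalysis_apply, ← Real.sqrt_sq (norm_nonneg _), norm_truncation_sq]
      exact Real.sqrt_le_sqrt ((hF f).sum_le_tsum _ fun i _ => sq_nonneg _)⟩
  refine ⟨C ^ 2 + 1, by positivity, fun f => (hF f).tsum_le_of_sum_range_le fun n => ?_⟩
  calc ∑ i ∈ range n, ⟪f, F i⟫ ^ 2 = ‖truncatedAnalysis F n f‖ ^ 2 := by
        rw [truncatedAnalysis_apply, norm_truncation_sq]
    _ ≤ (C * ‖f‖) ^ 2 := pow_le_pow_left₀ (norm_nonneg _)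
        (((truncatedAnalysis F n).le_opNorm f).trans (by gcongr; exact hC n)) 2
    _ ≤ (C ^ 2 + 1) * ‖f‖ ^ 2 := by rw [mul_pow]; gcongr; linarith

theorem tendsto_inner_truncation_of_tendsto {g F : ℕ → H} {h : H} (f : H)
    (hrec : Tendsto (fun n => ∑ i ∈ range n, ⟪h, g i⟫ • F i) atTop (𝓝 h))
    {u : ℓ²(ℕ, ℝ)} (hu : ∀ i, u i = ⟪h, g i⟫) :
    Tendsto (fun n => ⟪truncation (fun i => ⟪f, F i⟫) n, u⟫) atTop (𝓝 ⟪f, h⟫) := by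
  simpa [inner_truncation, inner_sum, real_inner_smul_right, hu, mul_comm] using
    (tendsto_const_nhds (x := f)).inner (𝕜 := ℝ) hrec

theorem inv_mul_norm_sq_le_tsum {g F : ℕ → H} {f : H} {B : ℝ} (hB : 0 < B)
    (hg : Summable fun i => ⟪f, g i⟫ ^ 2) (hgB : ∑' i, ⟪f, g i⟫ ^ 2 ≤ B * ‖f‖ ^ 2)
    (hF : Summable fun i => ⟪f, F i⟫ ^ 2)
    (hrec : Tendsto (fun n => ∑ i ∈ range n, ⟪f, g i⟫ • F i) atTop (𝓝 f)) :
    B⁻¹ * ‖f‖ ^ 2 ≤ ∑' i, ⟪f, F i⟫ ^ 2 := by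
  set T := ∑' i, ⟪f, F i⟫ ^ 2
  have hlim : Tendsto (fun n => (∑ i ∈ range n, ⟪f, g i⟫ * ⟪f, F i⟫) ^ 2) atTop
      (𝓝 ((‖f‖ ^ 2) ^ 2)) := by
    simpa [inner_sum, real_inner_smul_right, mul_comm] using
      ((tendsto_const_nhds (x := f)).inner (𝕜 := ℝ) hrec).pow 2
  have hsq : (‖f‖ ^ 2) ^ 2 ≤ (B * ‖f‖ ^ 2) * T := by
    refine le_of_tendsto' hlim fun n => (sum_mul_sq_le_sq_mul_sq _ _ _).trans ?_
    exact mul_le_mul ((hg.sum_le_tsum _ fun i _ => sq_nonneg _).trans hgB)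
      (hF.sum_le_tsum _ fun i _ => sq_nonneg _) (sum_nonneg fun i _ => sq_nonneg _)
      (by positivity)
  rw [inv_mul_le_iff₀ hB]
  rcases (sq_nonneg ‖f‖).eq_or_lt with hf | hf
  · rw [← hf]; exact mul_nonneg hB.le (tsum_nonneg fun i => sq_nonneg _)
  · nlinarith

end Frames

/-- If `(gᵢ)` is a frame with analysis operator `U` and the orthogonal complement of the
range of `U` is finite-dimensional, then every synthesis-pseudo-dual of `(gᵢ)` is a frame. -/
theorem stmt_13 (H : Type*) [NormedAddCommGroup H] [InnerProductSpace ℝ H] [CompleteSpace H]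
    (g : ℕ → H)
    (hframe : ∃ A B : ℝ, 0 < A ∧ 0 < B ∧ ∀ f : H,
      Summable (fun i => ⟪f, g i⟫ ^ 2) ∧
      A * ‖f‖ ^ 2 ≤ ∑' i, ⟪f, g i⟫ ^ 2 ∧ ∑' i, ⟪f, g i⟫ ^ 2 ≤ B * ‖f‖ ^ 2)
    (U : H →L[ℝ] lp (fun _ : ℕ => ℝ) 2) (hU : ∀ (f : H) (i : ℕ), U f i = ⟪f, g i⟫)
    (hfin : FiniteDimensional ℝ ((LinearMap.range (U : H →ₗ[ℝ] lp (fun _ : ℕ => ℝ) 2))ᗮ)) :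
    ∀ F : ℕ → H,
      (∀ f : H, Filter.Tendsto (fun n => ∑ i ∈ Finset.range n, ⟪f, g i⟫ • F i)
        Filter.atTop (nhds f)) →
      ∃ A B : ℝ, 0 < A ∧ 0 < B ∧ ∀ f : H,
        Summable (fun i => ⟪f, F i⟫ ^ 2) ∧
        A * ‖f‖ ^ 2 ≤ ∑' i, ⟪f, F i⟫ ^ 2 ∧ ∑' i, ⟪f, F i⟫ ^ 2 ≤ B * ‖f‖ ^ 2 := by
  intro F hF
  obtain ⟨A₀, B₀, hA₀, hB₀, hg⟩ := hframe
  have hclosed : IsClosed (Set.range U) :=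
    U.isClosed_range_of_mul_norm_sq_le hA₀ fun h => by
      simpa only [lp.norm_sq_eq_tsum_sq, hU] using (hg h).2.1
  have : CompleteSpace (LinearMap.range (U : H →ₗ[ℝ] ℓ²(ℕ, ℝ))) :=
    hclosed.completeSpace_coe
  have hsum : ∀ f, Summable fun i => ⟪f, F i⟫ ^ 2 := fun f =>
    summable_sq_of_forall_mem_tendsto_inner_truncation (LinearMap.range (U : H →ₗ[ℝ] ℓ²(ℕ, ℝ)))
      (by rintro _ ⟨h, rfl⟩; exact ⟨_, tendsto_inner_truncation_of_tendsto f (hF h) (hU h)⟩)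
  obtain ⟨B, hB, hBessel⟩ := exists_tsum_inner_sq_le hsum
  exact ⟨B₀⁻¹, B, by positivity, hB, fun f => ⟨hsum f,
    inv_mul_norm_sq_le_tsum hB₀ (hg f).1 (hg f).2.2 (hsum f) (hF f), hBessel f⟩⟩
end

section
/- Let H be a Hilbert space with orthonormal basis (e_i) and let G = (e₁, e₁, e₂, e₃, e₄, …). Then every sequence (f_i) in H satisfying f = Σᵢ ⟨f, gᵢ⟩ fᵢ for all f ∈ H has the form (w, e₁ − w, e₂, e₃, e₄, …) for some w ∈ H, and every such sequence is a frame for H. -/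
open scoped RealInnerProductSpace
open Filter Finset Topology

/-!
Since `g i = e (i - 1)`, expanding `f = e j` only involves the finitely many `i` with `i - 1 = j`,
so the series is eventually constant: `e 0 = F 0 + F 1` and `e (k + 1) = F (k + 2)`.
Conversely, for `F = (w, e 0 - w, e 1, e 2, …)` Parseval gives
`∑ ⟪f, F i⟫² = ⟪f, w⟫² + ⟪f, e 0 - w⟫² + (‖f‖² - ⟪f, e 0⟫²)`; the lower frame bound `1/2` comes
from `(a + b)² ≤ 2 (a² + b²)`, the upper one from Cauchy–Schwarz.
-/

theorem eq_sum_of_tendsto_sum_range {E : Type*} [AddCommMonoid E] [TopologicalSpace E]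
    [T2Space E] {u : ℕ → E} {x : E} (s : Finset ℕ)
    (hu : Tendsto (fun n => ∑ i ∈ range n, u i) atTop (𝓝 x)) (hs : ∀ i ∉ s, u i = 0) :
    x = ∑ i ∈ s, u i :=
  tendsto_nhds_unique hu (hasSum_sum_of_ne_finset_zero hs).tendsto_sum_nat

section

variable {H : Type*} [NormedAddCommGroup H] [InnerProductSpace ℝ H]

theorem inner_sq_le_norm_sq_mul_norm_sq (x y : H) : ⟪x, y⟫ ^ 2 ≤ ‖x‖ ^ 2 * ‖y‖ ^ 2 := by
  rw [← mul_pow]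
  exact sq_le_sq' (neg_le_of_abs_le (abs_real_inner_le_norm x y)) (real_inner_le_norm x y)

theorem HilbertBasis.hasSum_inner_sq {ι : Type*} (e : HilbertBasis ι ℝ H) (f : H) :
    HasSum (fun i => ⟪f, e i⟫ ^ 2) (‖f‖ ^ 2) := by
  simpa [sq, real_inner_comm f, real_inner_self_eq_norm_sq] using e.hasSum_inner_mul_inner f f

theorem HilbertBasis.hasSum_inner_sq_succ (e : HilbertBasis ℕ ℝ H) (f : H) :
    HasSum (fun k => ⟪f, e (k + 1)⟫ ^ 2) (‖f‖ ^ 2 - ⟪f, e 0⟫ ^ 2) := by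
  simpa using (hasSum_nat_add_iff' 1).mpr (e.hasSum_inner_sq f)

theorem HilbertBasis.inner_eq_ite {ι : Type*} [DecidableEq ι] (e : HilbertBasis ι ℝ H) (i j : ι) :
    ⟪e i, e j⟫ = if i = j then 1 else 0 :=
  orthonormal_iff_ite.mp e.orthonormal i j

theorem eq_of_tendsto_sum_inner_pred_smul (e : HilbertBasis ℕ ℝ H) {F : ℕ → H}
    (hF : ∀ f : H, Tendsto (fun n => ∑ i ∈ range n, ⟪f, e (i - 1)⟫ • F i) atTop (𝓝 f)) :
    e 0 = F 0 + F 1 ∧ ∀ k : ℕ, e (k + 1) = F (k + 2) := by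
  refine ⟨?_, fun k => ?_⟩
  · have := eq_sum_of_tendsto_sum_range {0, 1} (hF (e 0)) fun i hi => by
      simp only [mem_insert, mem_singleton, not_or] at hi
      simp [e.inner_eq_ite, show 0 ≠ i - 1 by omega]
    simpa [e.inner_eq_ite] using this
  · have := eq_sum_of_tendsto_sum_range {k + 2} (hF (e (k + 1))) fun i hi => by
      simp only [mem_singleton] at hi
      simp [e.inner_eq_ite, show k + 1 ≠ i - 1 by omega]
    simpa [e.inner_eq_ite] using this

theorem frame_bounds_of_eq_basis_succ (e : HilbertBasis ℕ ℝ H) (w : H) {F : ℕ → H}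
    (hF0 : F 0 = w) (hF1 : F 1 = e 0 - w) (hF : ∀ k : ℕ, F (k + 2) = e (k + 1)) (f : H) :
    Summable (fun i => ⟪f, F i⟫ ^ 2) ∧
      1 / 2 * ‖f‖ ^ 2 ≤ ∑' i, ⟪f, F i⟫ ^ 2 ∧
      ∑' i, ⟪f, F i⟫ ^ 2 ≤ (1 + ‖w‖ ^ 2 + ‖e 0 - w‖ ^ 2) * ‖f‖ ^ 2 := by
  set a := ⟪f, w⟫
  set b := ⟪f, e 0 - w⟫
  have hab : ⟪f, e 0⟫ = a + b := by simp [a, b, inner_sub_right]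
  have hsum : HasSum (fun i => ⟪f, F i⟫ ^ 2) (a ^ 2 + b ^ 2 + (‖f‖ ^ 2 - ⟪f, e 0⟫ ^ 2)) := by
    rw [← hasSum_nat_add_iff' 2]
    simpa [sum_range_succ, hF0, hF1, hF, a, b] using e.hasSum_inner_sq_succ f
  have htail : 0 ≤ ‖f‖ ^ 2 - ⟪f, e 0⟫ ^ 2 :=
    (e.hasSum_inner_sq_succ f).nonneg fun _ => sq_nonneg _
  rw [hsum.tsum_eq]
  refine ⟨hsum.summable, ?_, ?_⟩
  · rw [hab] at htail ⊢
    nlinarith [sq_nonneg (a - b)]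
  · nlinarith [inner_sq_le_norm_sq_mul_norm_sq f w, inner_sq_le_norm_sq_mul_norm_sq f (e 0 - w),
      sq_nonneg ⟪f, e 0⟫]

end

/-- For `G = (e₁, e₁, e₂, e₃, e₄, …)`, every synthesis-pseudo-dual of `G` has the form
`(w, e₁ − w, e₂, e₃, …)`, and every sequence of this form is a frame for `H`. -/
theorem stmt_14 (H : Type*) [NormedAddCommGroup H] [InnerProductSpace ℝ H]
    (e : HilbertBasis ℕ ℝ H) (g : ℕ → H)
    (hg : g 0 = e 0 ∧ g 1 = e 0 ∧ ∀ k : ℕ, g (k + 2) = e (k + 1)) :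
    (∀ F : ℕ → H,
      (∀ f : H, Filter.Tendsto (fun n => ∑ i ∈ Finset.range n, ⟪f, g i⟫ • F i)
        Filter.atTop (nhds f)) →
      ∃ w : H, F 0 = w ∧ F 1 = e 0 - w ∧ ∀ k : ℕ, F (k + 2) = e (k + 1)) ∧
    (∀ F : ℕ → H,
      (∃ w : H, F 0 = w ∧ F 1 = e 0 - w ∧ ∀ k : ℕ, F (k + 2) = e (k + 1)) →
      ∃ A B : ℝ, 0 < A ∧ 0 < B ∧ ∀ f : H,
        Summable (fun i => ⟪f, F i⟫ ^ 2) ∧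
        A * ‖f‖ ^ 2 ≤ ∑' i, ⟪f, F i⟫ ^ 2 ∧ ∑' i, ⟪f, F i⟫ ^ 2 ≤ B * ‖f‖ ^ 2) := by
  obtain ⟨hg0, hg1, hg2⟩ := hg
  have hg_pred : g = fun i => e (i - 1) := by
    funext i
    rcases i with _ | _ | k
    exacts [hg0, hg1, hg2 k]
  refine ⟨fun F hF => ?_, fun F ⟨w, hF0, hF1, hF⟩ => ?_⟩
  · subst hg_pred
    obtain ⟨h01, hsucc⟩ := eq_of_tendsto_sum_inner_pred_smul e hF
    exact ⟨F 0, rfl, by rw [h01, add_sub_cancel_left], fun k => (hsucc k).symm⟩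
  · exact ⟨1 / 2, 1 + ‖w‖ ^ 2 + ‖e 0 - w‖ ^ 2, by norm_num, by positivity,
      frame_bounds_of_eq_basis_succ e w hF0 hF1 hF⟩
end

section
/- Let H be a Hilbert space and (f_i) a sequence satisfying the lower frame condition whose analysis operator U (with domain D(U) = {f : (⟨f, fᵢ⟩) ∈ ℓ²}) is densely defined. Then there exists a Bessel sequence (g_i) in H such that whenever f ∈ H and the series Σᵢ ⟨f, gᵢ⟩ fᵢ converges in H, its sum equals f. -/
open scoped RealInnerProductSpace lp

/-!
The lower frame bound `√A ‖h‖ ≤ ‖U h‖` makes `U⁻¹ : range U → H` bounded. Extending it to the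
closure of `range U` and precomposing with the orthogonal projection onto that closure gives a
bounded left inverse `W : ℓ² → H` of `U`. Put `gᵢ = W eᵢ`; then `⟨f, gᵢ⟩ = (W* f)ᵢ`, so `(gᵢ)` is
Bessel with bound `‖W*‖²`, and for `h ∈ D(U)` the partial sums satisfy
`⟨Σᵢ ⟨f, gᵢ⟩ fᵢ, h⟩ → ⟨W* f, U h⟩ = ⟨f, W U h⟩ = ⟨f, h⟩`. Density of `D(U)` then forces the sum
of the series to be `f`.
-/

theorem memℓp_two_iff_summable_sq {ι : Type*} {x : ι → ℝ} :
    Memℓp x 2 ↔ Summable fun i => x i ^ 2 := by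
  rw [memℓp_gen_iff (by norm_num)]
  norm_num [Real.rpow_two]

section LeftInverse

variable {𝕜 E F : Type*} [RCLike 𝕜] [NormedAddCommGroup E] [NormedSpace 𝕜 E] [CompleteSpace E]
  [NormedAddCommGroup F] [InnerProductSpace 𝕜 F] [CompleteSpace F]

theorem LinearPMap.exists_leftInverse_of_norm_le (T : E →ₗ.[𝕜] F) (C : ℝ)
    (hT : ∀ x : T.domain, ‖(x : E)‖ ≤ C * ‖T x‖) :
    ∃ W : F →L[𝕜] E, ∀ x : T.domain, W (T x) = x := by
  set K := (LinearMap.range T.toFun).topologicalClosure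
  let e : T.domain →ₗ[𝕜] K := T.toFun.codRestrict K fun x =>
    (LinearMap.range T.toFun).le_topologicalClosure (LinearMap.mem_range_self _ x)
  have he : DenseRange e := by
    rw [DenseRange, Subtype.dense_iff, ← Set.range_comp]
    exact (Submodule.topologicalClosure_coe _).le
  refine ⟨(T.domain.subtype.extendOfNorm e).comp K.orthogonalProjectionOnto, fun x => ?_⟩
  have hproj : K.orthogonalProjectionOnto (T x) = e x :=
    K.orthogonalProjectionOnto_mem_subspace_eq_self (e x)
  simp only [ContinuousLinearMap.comp_apply, hproj]
  exact LinearMap.extendOfNorm_eq he ⟨C, hT⟩ x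

end LeftInverse

namespace ContinuousLinearMap

variable {ι H : Type*} [DecidableEq ι] [NormedAddCommGroup H] [InnerProductSpace ℝ H]
  [CompleteSpace H] (W : ℓ²(ι, ℝ) →L[ℝ] H) (f : H)

theorem inner_apply_single (i : ι) : ⟪f, W (lp.single 2 i 1)⟫ = W.adjoint f i := by
  rw [← W.adjoint_inner_left, lp.inner_single_right]
  simp

theorem hasSum_inner_apply_single_mul (x : ℓ²(ι, ℝ)) :
    HasSum (fun i => ⟪f, W (lp.single 2 i 1)⟫ * x i) ⟪f, W x⟫ := by
  rw [← W.adjoint_inner_left]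
  refine (lp.hasSum_inner _ _).congr_fun fun i => ?_
  simp [inner_apply_single, mul_comm]

theorem hasSum_inner_apply_single_sq :
    HasSum (fun i => ⟪f, W (lp.single 2 i 1)⟫ ^ 2) (‖W.adjoint f‖ ^ 2) := by
  rw [← real_inner_self_eq_norm_sq]
  refine (lp.hasSum_inner _ _).congr_fun fun i => ?_
  simp [inner_apply_single, sq]

end ContinuousLinearMap

section AnalysisOperator

variable {ι H : Type*} [NormedAddCommGroup H] [InnerProductSpace ℝ H]

def analysisDomain (F : ι → H) : Submodule ℝ H where
  carrier := {f | Memℓp (fun i => ⟪f, F i⟫) 2}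
  zero_mem' := by simpa [Pi.zero_def] using zero_memℓp
  add_mem' ha hb := by simpa [inner_add_left, Pi.add_def] using ha.add hb
  smul_mem' c _ ha := by simpa [real_inner_smul_left, Pi.smul_def] using ha.const_smul c

def analysisOp (F : ι → H) : H →ₗ.[ℝ] ℓ²(ι, ℝ) where
  domain := analysisDomain F
  toFun :=
    { toFun f := ⟨fun i => ⟪(f : H), F i⟫, f.2⟩
      map_add' a b := by ext i; exact inner_add_left _ _ _
      map_smul' c a := by ext i; exact real_inner_smul_left _ _ _ }

theorem analysisOp_apply (F : ι → H) (f : (analysisOp F).domain) (i : ι) :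
    analysisOp F f i = ⟪(f : H), F i⟫ := rfl

theorem norm_analysisOp_sq (F : ι → H) (f : (analysisOp F).domain) :
    ‖analysisOp F f‖ ^ 2 = ∑' i, ⟪(f : H), F i⟫ ^ 2 := by
  rw [← real_inner_self_eq_norm_sq, lp.inner_eq_tsum]
  simp [analysisOp_apply, sq]

theorem norm_le_inv_sqrt_mul_norm_analysisOp {F : ι → H} {A : ℝ} (hA : 0 < A)
    (hlow : ∀ f : H, Summable (fun i => ⟪f, F i⟫ ^ 2) → A * ‖f‖ ^ 2 ≤ ∑' i, ⟪f, F i⟫ ^ 2)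
    (f : (analysisOp F).domain) : ‖(f : H)‖ ≤ (√A)⁻¹ * ‖analysisOp F f‖ := by
  rw [le_inv_mul_iff₀ (Real.sqrt_pos.2 hA), ← pow_le_pow_iff_left₀ (by positivity)
    (norm_nonneg _) two_ne_zero, mul_pow, Real.sq_sqrt hA.le, norm_analysisOp_sq]
  exact hlow f (memℓp_two_iff_summable_sq.1 f.2)

end AnalysisOperator

/-- If `(fᵢ)` satisfies the lower frame condition and its analysis operator is densely
defined, then there is a Bessel sequence `(gᵢ)` such that whenever `Σᵢ ⟨f, gᵢ⟩ fᵢ`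
converges, its sum equals `f`. -/
theorem stmt_19 (H : Type*) [NormedAddCommGroup H] [InnerProductSpace ℝ H] [CompleteSpace H]
    (F : ℕ → H) (A : ℝ) (hA : 0 < A)
    (hlow : ∀ f : H, Summable (fun i => ⟪f, F i⟫ ^ 2) → A * ‖f‖ ^ 2 ≤ ∑' i, ⟪f, F i⟫ ^ 2)
    (hdense : Dense {f : H | Summable (fun i => ⟪f, F i⟫ ^ 2)}) :
    ∃ (g : ℕ → H) (B : ℝ),
      (∀ f : H, Summable (fun i => ⟪f, g i⟫ ^ 2) ∧ ∑' i, ⟪f, g i⟫ ^ 2 ≤ B * ‖f‖ ^ 2) ∧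
      ∀ f s : H, Filter.Tendsto (fun n => ∑ i ∈ Finset.range n, ⟪f, g i⟫ • F i)
        Filter.atTop (nhds s) → s = f := by
  obtain ⟨W, hW⟩ := (analysisOp F).exists_leftInverse_of_norm_le _
    (norm_le_inv_sqrt_mul_norm_analysisOp hA hlow)
  refine ⟨fun i => W (lp.single 2 i 1), ‖W.adjoint‖ ^ 2, fun f => ?_, fun f s hs => ?_⟩
  · have hsum := W.hasSum_inner_apply_single_sq f
    refine ⟨hsum.summable, hsum.tsum_eq ▸ ?_⟩
    rw [← mul_pow]
    exact pow_le_pow_left₀ (norm_nonneg _) (W.adjoint.le_opNorm f) 2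
  refine hdense.eq_of_inner_left ℝ fun h hh => ?_
  let x : (analysisOp F).domain := ⟨h, memℓp_two_iff_summable_sq.2 hh⟩
  have hlim := (W.hasSum_inner_apply_single_mul f (analysisOp F x)).tendsto_sum_nat
  rw [hW] at hlim
  rw [real_inner_comm]
  refine tendsto_nhds_unique ((tendsto_const_nhds.inner hs).congr fun n => ?_) hlim
  simp only [inner_sum, real_inner_smul_right, analysisOp_apply, x]
end
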